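/- arXiv:0711.4127 — 8 statements merged into one kernel-verified Lean document; each statement's English description precedes it below -/
import Mathlib

section
/- Let (X, Σ, μ) be a measure space with μ(X) < ∞. Let f, g : X → ℝ be μ-integrable functions that are μ-a.e. correlated, and suppose that f·g is μ-integrable. Then equality μ(X) · ∫_X f g dμ = (∫_X f dμ) · (∫_X g dμ) holds if and only if at least one of the two functions f, g is μ-a.e. equal to a constant. -/
/-!
The identity `∬ (f x - f y) (g x - g y) dμ(x) dμ(y) = 2 (μ(X) ∫ f g - ∫ f ∫ g)` turns the equality
into the vanishing of the integral of an a.e. nonnegative function, i.e. into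
`f x = f y ∨ g x = g y` for a.e. pair `(x, y)`. If `f` is not a.e. equal to `f x₀` for a generic
`x₀`, pick a generic `y₁` with `f y₁ ≠ f x₀`: then `g y = g x₀` for a.e. `y` with `f y ≠ f x₀`,
and `g y = g y₁ = g x₀` for a.e. `y` with `f y = f x₀`.
-/

open MeasureTheory Set

section

variable {X : Type*} [MeasurableSpace X] {μ : Measure X}

theorem ae_const_or_ae_const_of_ae_prod {β γ : Type*} [Nonempty β] [SFinite μ]
    {f : X → β} {g : X → γ}
    (h : ∀ᵐ p ∂μ.prod μ, f p.1 = f p.2 ∨ g p.1 = g p.2) :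
    (∃ c, ∀ᵐ x ∂μ, f x = c) ∨ (∃ c, ∀ᵐ x ∂μ, g x = c) := by
  by_cases hμ : μ = 0
  · subst hμ
    simp
  have := ae_neBot.2 hμ
  have hae : ∀ᵐ x ∂μ, ∀ᵐ y ∂μ, f x = f y ∨ g x = g y := Measure.ae_ae_of_ae_prod h
  obtain ⟨x₀, hx₀⟩ := hae.exists
  by_cases hf : ∀ᵐ y ∂μ, f y = f x₀
  · exact Or.inl ⟨f x₀, hf⟩
  obtain ⟨y₁, hfy₁, hy₁, hgy₁⟩ :=
    ((Filter.not_eventually.1 hf).and_eventually (hae.and hx₀)).exists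
  have hg : g x₀ = g y₁ := hgy₁.resolve_left fun h ↦ hfy₁ h.symm
  refine Or.inr ⟨g x₀, ?_⟩
  filter_upwards [hx₀, hy₁] with y hx₀y hy₁y
  rcases hx₀y with hfy | hgy
  · rw [hg, hy₁y.resolve_left fun h ↦ hfy₁ (h.trans hfy.symm)]
  · exact hgy.symm

theorem measureReal_univ_mul_integral_mul_of_ae_eq_const {f g : X → ℝ} {c : ℝ}
    (hf : ∀ᵐ x ∂μ, f x = c) :
    μ.real univ * ∫ x, f x * g x ∂μ = (∫ x, f x ∂μ) * ∫ x, g x ∂μ := by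
  have hfg : ∫ x, f x * g x ∂μ = c * ∫ x, g x ∂μ := by
    rw [← integral_const_mul]
    exact integral_congr_ae (by filter_upwards [hf] with x hx using by rw [hx])
  rw [hfg, integral_congr_ae hf, integral_const, smul_eq_mul]
  ring

section Chebyshev

variable [IsFiniteMeasure μ] {f g : X → ℝ}

theorem integrable_prod_mul_sub_mul_sub (hf : Integrable f μ) (hg : Integrable g μ)
    (hfg : Integrable (fun x ↦ f x * g x) μ) :
    Integrable (fun p : X × X ↦ (f p.1 - f p.2) * (g p.1 - g p.2)) (μ.prod μ) :=
  ((((hfg.mul_prod (integrable_const 1)).sub (hf.mul_prod hg)).sub (hg.mul_prod hf)).add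
    ((integrable_const 1).mul_prod hfg)).congr
      (ae_of_all _ fun p ↦ by simp only [Pi.add_apply, Pi.sub_apply]; ring)

theorem integral_prod_mul_sub_mul_sub (hf : Integrable f μ) (hg : Integrable g μ)
    (hfg : Integrable (fun x ↦ f x * g x) μ) :
    ∫ p, (f p.1 - f p.2) * (g p.1 - g p.2) ∂μ.prod μ =
      2 * (μ.real univ * ∫ x, f x * g x ∂μ - (∫ x, f x ∂μ) * ∫ x, g x ∂μ) := by
  have i₁ := hfg.mul_prod (integrable_const (1 : ℝ)) (ν := μ)
  have i₂ := hf.mul_prod hg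
  have i₃ := hg.mul_prod hf
  have i₄ := (integrable_const (1 : ℝ)).mul_prod hfg (μ := μ)
  -- the factors `1` put every term in the form `φ p.1 * ψ p.2` required by `integral_prod_mul`
  have expand : (fun p : X × X ↦ (f p.1 - f p.2) * (g p.1 - g p.2)) = fun p ↦
      f p.1 * g p.1 * 1 - f p.1 * g p.2 - g p.1 * f p.2 + 1 * (f p.2 * g p.2) := by
    ext p; ring
  rw [expand, integral_add _ i₄, integral_sub _ i₃, integral_sub i₁ i₂,
    integral_prod_mul (fun x ↦ f x * g x) (fun _ ↦ (1 : ℝ)), integral_prod_mul f g,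
    integral_prod_mul g f, integral_prod_mul (fun _ ↦ (1 : ℝ)) (fun x ↦ f x * g x),
    integral_const, smul_eq_mul]
  · ring
  · exact i₁.sub i₂
  · exact (i₁.sub i₂).sub i₃

end Chebyshev

end

/-- **Equality case of the Chebyshev-type inequality** (Theorem 3.1(1), equality part).
For a finite measure `μ` and `μ`-integrable, `μ`-a.e. correlated functions `f, g` with `f * g`
`μ`-integrable, equality `μ(X) ∫ f g dμ = (∫ f dμ)(∫ g dμ)` holds iff `f` or `g` is `μ`-a.e.
constant. -/
theorem stmt_1 {X : Type*} [MeasurableSpace X] (μ : Measure X)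
    (hμ : μ Set.univ < ⊤)
    (f g : X → ℝ) (hf : Integrable f μ) (hg : Integrable g μ)
    (hfg : Integrable (fun x => f x * g x) μ)
    (hcorr : ∀ᵐ p ∂(μ.prod μ), 0 ≤ (f p.1 - f p.2) * (g p.1 - g p.2)) :
    (μ Set.univ).toReal * ∫ x, f x * g x ∂μ = (∫ x, f x ∂μ) * (∫ x, g x ∂μ) ↔
      (∃ c : ℝ, ∀ᵐ x ∂μ, f x = c) ∨ (∃ c : ℝ, ∀ᵐ x ∂μ, g x = c) := by
  have : IsFiniteMeasure μ := ⟨hμ⟩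
  rw [← measureReal_def]
  constructor
  · intro heq
    have hzero : ∫ p, (f p.1 - f p.2) * (g p.1 - g p.2) ∂μ.prod μ = 0 := by
      rw [integral_prod_mul_sub_mul_sub hf hg hfg, heq, sub_self, mul_zero]
    have hae := (integral_eq_zero_iff_of_nonneg_ae hcorr
      (integrable_prod_mul_sub_mul_sub hf hg hfg)).1 hzero
    refine ae_const_or_ae_const_of_ae_prod ?_
    filter_upwards [hae] with p hp
    simpa only [Pi.zero_apply, mul_eq_zero, sub_eq_zero] using hp
  · rintro (⟨c, hc⟩ | ⟨c, hc⟩)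
    · exact measureReal_univ_mul_integral_mul_of_ae_eq_const hc
    · simpa only [mul_comm] using measureReal_univ_mul_integral_mul_of_ae_eq_const (g := f) hc
end

section
/- Let (X, Σ, μ) be a measure space with μ(X) < ∞ and let k ≥ 1. Let f₁, …, f_k : X → ℝ be nonnegative measurable functions that are μ-a.e. pairwise correlated, and assume 0 < ∫_X f_i dμ < ∞ for every i = 1, …, k. Then equality μ(X)^{k−1} · ∫_X ∏_{i=1}^k f_i dμ = ∏_{i=1}^k ∫_X f_i dμ holds if and only if at least k − 1 of the functions are μ-a.e. constant, i.e. there exists an index i₀ such that for every i ≠ i₀ the function f_i is μ-a.e. equal to a constant. -/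
/-!
For nonnegative correlated `a, b`, integrating `(a x - a y) (b x - b y) ≥ 0` over `μ ⊗ μ` gives
`2 (μ(X) ∫ a b - ∫ a ∫ b) = ∬ (a x - a y) (b x - b y) ≥ 0` (Chebyshev). A product of nonnegative
functions correlated with `f` is again correlated with `f`, so induction on the number of factors
gives `μ(X) ∏ ∫ f_i ≤ μ(X) ^ k ∫ ∏ f_i`. In the case of equality every step of the induction is an
equality, so at each step `(a x - a y) (b x - b y)` vanishes a.e., which forces the new factor or
the partial product to be a.e. constant. A partial product that is a.e. a nonzero constant has
a.e. constant factors: if one factor were larger at `x` than at `y`, correlation would make all of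
them at least as large, and the product larger. Conversely, a.e. constant factors split off the
integrals.
-/

open MeasureTheory Filter Finset
open scoped ENNReal

section

variable {X Y ι : Type*} [MeasurableSpace X] [MeasurableSpace Y]

def AECorrelated (μ : Measure X) (a b : X → ℝ) : Prop :=
  ∀ᵐ p ∂μ.prod μ, 0 ≤ (a p.1 - a p.2) * (b p.1 - b p.2)

variable {μ : Measure X}

theorem AECorrelated.mul {a b c : X → ℝ} (hb : AECorrelated μ a b) (hc : AECorrelated μ a c)
    (hb0 : ∀ x, 0 ≤ b x) (hc0 : ∀ x, 0 ≤ c x) : AECorrelated μ a (b * c) := by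
  filter_upwards [hb, hc] with p hbp hcp
  have hsplit : (a p.1 - a p.2) * ((b * c) p.1 - (b * c) p.2) =
      c p.1 * ((a p.1 - a p.2) * (b p.1 - b p.2)) +
        b p.2 * ((a p.1 - a p.2) * (c p.1 - c p.2)) := by
    simp only [Pi.mul_apply]; ring
  rw [hsplit]
  exact add_nonneg (mul_nonneg (hc0 _) hbp) (mul_nonneg (hb0 _) hcp)

theorem AECorrelated.finset_prod {a : X → ℝ} {f : ι → X → ℝ} {s : Finset ι}
    (hf : ∀ i ∈ s, AECorrelated μ a (f i)) (hf0 : ∀ i x, 0 ≤ f i x) :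
    AECorrelated μ a fun x ↦ ∏ i ∈ s, f i x := by
  rw [← Finset.prod_fn]
  refine (prod_induction f (fun g ↦ AECorrelated μ a g ∧ ∀ x, 0 ≤ g x)
    (fun g h hg hh ↦ ⟨hg.1.mul hh.1 hg.2 hh.2, fun x ↦ mul_nonneg (hg.2 x) (hh.2 x)⟩)
    ⟨ae_of_all _ fun p ↦ by simp, fun _ ↦ zero_le_one⟩ fun i hi ↦ ⟨hf i hi, hf0 i⟩).1

theorem Filter.EventuallyConst.finset_prod {α β : Type*} [CommMonoid β] {l : Filter α}
    {f : ι → α → β} {s : Finset ι} (hf : ∀ i ∈ s, EventuallyConst (f i) l) :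
    EventuallyConst (fun x ↦ ∏ i ∈ s, f i x) l := by
  rw [← Finset.prod_fn]
  exact prod_induction f (EventuallyConst · l) (fun _ _ ↦ EventuallyConst.mul) (.const 1) hf

theorem eventuallyConst_ae_of_ae_ae {β : Type*} {F : X → β}
    (h : ∀ᵐ x ∂μ, ∀ᵐ y ∂μ, F x = F y) : EventuallyConst F (ae μ) := by
  rcases eq_or_ne μ 0 with rfl | hμ
  · simp
  · have : (ae μ).NeBot := ae_neBot.2 hμ
    obtain ⟨x, hx⟩ := h.exists
    exact (EventuallyConst.const (F x)).congr hx

theorem eventuallyConst_ae_or_of_ae_ae {β γ : Type*} {a : X → β} {b : X → γ}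
    (h : ∀ᵐ x ∂μ, ∀ᵐ y ∂μ, a x = a y ∨ b x = b y) :
    EventuallyConst a (ae μ) ∨ EventuallyConst b (ae μ) := by
  refine or_iff_not_imp_left.2 fun ha ↦ eventuallyConst_ae_of_ae_ae ?_
  filter_upwards [h] with x hx
  filter_upwards [h, hx] with y hy hxy
  have hne : ∃ᵐ z ∂μ, a x ≠ a z := fun hz ↦
    ha ((EventuallyConst.const (a x)).congr (hz.mono fun _ ↦ not_not.1))
  -- any `z` with `a z ≠ a x` forces `b x = b z`, and also `b y = b z` unless `b x = b y` already
  obtain ⟨z, hxz, hz, hyz⟩ := (hne.and_eventually (hx.and hy)).exists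
  rcases hxy with hxy | hxy
  · rw [hz.resolve_left hxz, hyz.resolve_left (hxy ▸ hxz)]
  · exact hxy

theorem lintegral_prod_ofReal_mul {ν : Measure Y} [SFinite ν] {a : X → ℝ} {b : Y → ℝ}
    (ha : Measurable a) (hb : Measurable b) (ha0 : ∀ x, 0 ≤ a x) :
    ∫⁻ p, ENNReal.ofReal (a p.1 * b p.2) ∂μ.prod ν =
      (∫⁻ x, ENNReal.ofReal (a x) ∂μ) * ∫⁻ y, ENNReal.ofReal (b y) ∂ν := by
  simp_rw [ENNReal.ofReal_mul (ha0 _)]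
  exact lintegral_prod_mul ha.ennreal_ofReal.aemeasurable hb.ennreal_ofReal.aemeasurable

section Pair

variable [SFinite μ] {a b : X → ℝ}

theorem AECorrelated.two_mul_measure_univ_mul_lintegral_mul (h : AECorrelated μ a b)
    (ha : Measurable a) (hb : Measurable b) (ha0 : ∀ x, 0 ≤ a x) (hb0 : ∀ x, 0 ≤ b x) :
    2 * (μ Set.univ * ∫⁻ x, ENNReal.ofReal (a x * b x) ∂μ) =
      2 * ((∫⁻ x, ENNReal.ofReal (a x) ∂μ) * ∫⁻ x, ENNReal.ofReal (b x) ∂μ) +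
        ∫⁻ p, ENNReal.ofReal ((a p.1 - a p.2) * (b p.1 - b p.2)) ∂μ.prod μ := by
  have hab0 x : 0 ≤ a x * b x := mul_nonneg (ha0 x) (hb0 x)
  have hpt : ∀ᵐ p ∂μ.prod μ,
      ENNReal.ofReal (a p.1 * b p.1) + ENNReal.ofReal (a p.2 * b p.2) =
        ENNReal.ofReal (a p.1 * b p.2) + ENNReal.ofReal (b p.1 * a p.2) +
          ENNReal.ofReal ((a p.1 - a p.2) * (b p.1 - b p.2)) := by
    filter_upwards [h] with p hp
    have h₁ : 0 ≤ a p.1 * b p.2 := mul_nonneg (ha0 _) (hb0 _)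
    have h₂ : 0 ≤ b p.1 * a p.2 := mul_nonneg (hb0 _) (ha0 _)
    rw [← ENNReal.ofReal_add (hab0 _) (hab0 _), ← ENNReal.ofReal_add h₁ h₂,
      ← ENNReal.ofReal_add (add_nonneg h₁ h₂) hp]
    ring_nf
  have hfst : ∫⁻ p, ENNReal.ofReal (a p.1 * b p.1) ∂μ.prod μ =
      (∫⁻ x, ENNReal.ofReal (a x * b x) ∂μ) * μ Set.univ := by
    simpa using lintegral_prod_ofReal_mul (ν := μ) (ha.mul hb) (measurable_const (a := 1)) hab0
  have hsnd : ∫⁻ p, ENNReal.ofReal (a p.2 * b p.2) ∂μ.prod μ =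
      μ Set.univ * ∫⁻ x, ENNReal.ofReal (a x * b x) ∂μ := by
    simpa using lintegral_prod_ofReal_mul (μ := μ) (ν := μ) (measurable_const (a := 1))
      (ha.mul hb) fun _ ↦ zero_le_one
  have hint := lintegral_congr_ae hpt
  rw [lintegral_add_left (by fun_prop), lintegral_add_left (by fun_prop),
    lintegral_add_left (by fun_prop), hfst, hsnd, lintegral_prod_ofReal_mul ha hb ha0,
    lintegral_prod_ofReal_mul hb ha hb0] at hint
  rw [mul_comm _ (μ Set.univ), mul_comm (∫⁻ x, ENNReal.ofReal (b x) ∂μ)] at hint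
  rwa [two_mul, two_mul]

theorem AECorrelated.lintegral_mul_le (h : AECorrelated μ a b) (ha : Measurable a)
    (hb : Measurable b) (ha0 : ∀ x, 0 ≤ a x) (hb0 : ∀ x, 0 ≤ b x) :
    (∫⁻ x, ENNReal.ofReal (a x) ∂μ) * ∫⁻ x, ENNReal.ofReal (b x) ∂μ ≤
      μ Set.univ * ∫⁻ x, ENNReal.ofReal (a x * b x) ∂μ := by
  refine (ENNReal.mul_le_mul_iff_right two_ne_zero ENNReal.ofNat_ne_top).1 ?_
  rw [h.two_mul_measure_univ_mul_lintegral_mul ha hb ha0 hb0]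
  exact le_self_add

theorem AECorrelated.eventuallyConst_or_of_lintegral_mul_eq (h : AECorrelated μ a b)
    (ha : Measurable a) (hb : Measurable b) (ha0 : ∀ x, 0 ≤ a x) (hb0 : ∀ x, 0 ≤ b x)
    (hfin : (∫⁻ x, ENNReal.ofReal (a x) ∂μ) * ∫⁻ x, ENNReal.ofReal (b x) ∂μ ≠ ⊤)
    (heq : μ Set.univ * ∫⁻ x, ENNReal.ofReal (a x * b x) ∂μ =
      (∫⁻ x, ENNReal.ofReal (a x) ∂μ) * ∫⁻ x, ENNReal.ofReal (b x) ∂μ) :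
    EventuallyConst a (ae μ) ∨ EventuallyConst b (ae μ) := by
  have hdouble := h.two_mul_measure_univ_mul_lintegral_mul ha hb ha0 hb0
  rw [heq] at hdouble
  have hD : ∫⁻ p, ENNReal.ofReal ((a p.1 - a p.2) * (b p.1 - b p.2)) ∂μ.prod μ = 0 :=
    (ENNReal.add_right_inj (ENNReal.mul_ne_top ENNReal.ofNat_ne_top hfin)).1
      (hdouble.symm.trans (add_zero _).symm)
  rw [lintegral_eq_zero_iff (by fun_prop)] at hD
  have hzero : ∀ᵐ p ∂μ.prod μ, a p.1 = a p.2 ∨ b p.1 = b p.2 := by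
    filter_upwards [hD, h] with p hp hp0
    rw [← sub_eq_zero, ← sub_eq_zero (a := b p.1), ← mul_eq_zero]
    exact le_antisymm (ENNReal.ofReal_eq_zero.1 hp) hp0
  exact eventuallyConst_ae_or_of_ae_ae (Measure.ae_ae_of_ae_prod hzero)

end Pair

section Const

variable {a b : X → ℝ}

theorem lintegral_mul_eq_of_eventuallyConst_right (ha : Measurable a) (ha0 : ∀ x, 0 ≤ a x)
    (hb : EventuallyConst b (ae μ)) :
    μ Set.univ * ∫⁻ x, ENNReal.ofReal (a x * b x) ∂μ =
      (∫⁻ x, ENNReal.ofReal (a x) ∂μ) * ∫⁻ x, ENNReal.ofReal (b x) ∂μ := by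
  obtain ⟨c, hc⟩ := eventuallyConst_iff_exists_eventuallyEq.1 hb
  have hab : ∫⁻ x, ENNReal.ofReal (a x * b x) ∂μ =
      (∫⁻ x, ENNReal.ofReal (a x) ∂μ) * ENNReal.ofReal c := by
    rw [← lintegral_mul_const _ ha.ennreal_ofReal]
    refine lintegral_congr_ae (hc.mono fun x hx ↦ ?_)
    dsimp only at hx ⊢
    rw [hx, ENNReal.ofReal_mul (ha0 x)]
  have hbint : ∫⁻ x, ENNReal.ofReal (b x) ∂μ = ENNReal.ofReal c * μ Set.univ := by
    rw [lintegral_congr_ae (hc.mono fun x hx ↦ congrArg ENNReal.ofReal hx), lintegral_const]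
  rw [hab, hbint]
  ring

theorem lintegral_mul_eq_of_eventuallyConst (ha : Measurable a) (hb : Measurable b)
    (ha0 : ∀ x, 0 ≤ a x) (hb0 : ∀ x, 0 ≤ b x)
    (hconst : EventuallyConst a (ae μ) ∨ EventuallyConst b (ae μ)) :
    μ Set.univ * ∫⁻ x, ENNReal.ofReal (a x * b x) ∂μ =
      (∫⁻ x, ENNReal.ofReal (a x) ∂μ) * ∫⁻ x, ENNReal.ofReal (b x) ∂μ := by
  rcases hconst with hconst | hconst
  · simp_rw [mul_comm (a _), mul_comm (∫⁻ x, ENNReal.ofReal (a x) ∂μ)]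
    exact lintegral_mul_eq_of_eventuallyConst_right hb hb0 hconst
  · exact lintegral_mul_eq_of_eventuallyConst_right ha ha0 hconst

end Const

theorem le_of_prod_eq_prod_of_correlated {s : Finset ι} {u v : ι → ℝ} {i : ι} (hi : i ∈ s)
    (hv : ∀ l ∈ s, 0 < v l) (hcorr : ∀ l ∈ s, 0 ≤ (u l - v l) * (u i - v i))
    (heq : ∏ l ∈ s, u l = ∏ l ∈ s, v l) : u i ≤ v i := by
  by_contra! hlt
  have hle l (hl : l ∈ s) : v l ≤ u l :=
    sub_nonneg.1 (nonneg_of_mul_nonneg_left (hcorr l hl) (sub_pos.2 hlt))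
  exact (prod_lt_prod hv hle ⟨i, hi, hlt⟩).ne' heq

theorem ENNReal.eq_and_eq_of_mul_eq_mul {F N P J Q : ℝ≥0∞} (hF0 : F ≠ 0) (hFtop : F ≠ ⊤)
    (hN0 : N ≠ 0) (hNtop : N ≠ ⊤) (hP : P ≤ N * J) (hQ : F * J ≤ Q) (heq : F * P = N * Q) :
    P = N * J ∧ F * J = Q := by
  have hFP : F * P = F * (N * J) := by
    refine le_antisymm (by gcongr) ?_
    calc F * (N * J) = N * (F * J) := mul_left_comm _ _ _
      _ ≤ N * Q := by gcongr
      _ = F * P := heq.symm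
  refine ⟨(ENNReal.mul_right_inj hF0 hFtop).1 hFP, (ENNReal.mul_right_inj hN0 hNtop).1 ?_⟩
  rw [mul_left_comm, ← hFP, heq]

section Family

variable {f : ι → X → ℝ}

theorem eventuallyConst_of_eventuallyConst_finset_prod [SFinite μ] {s : Finset ι}
    (hcorr : ∀ i j, AECorrelated μ (f i) (f j)) (hf0 : ∀ i x, 0 ≤ f i x)
    (hconst : EventuallyConst (fun x ↦ ∏ i ∈ s, f i x) (ae μ))
    (hint : ∫⁻ x, ENNReal.ofReal (∏ i ∈ s, f i x) ∂μ ≠ 0) :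
    ∀ i ∈ s, EventuallyConst (f i) (ae μ) := by
  obtain ⟨c, hc⟩ := eventuallyConst_iff_exists_eventuallyEq.1 hconst
  have hc0 : c ≠ 0 := by
    rintro rfl
    exact hint (by simpa using lintegral_congr_ae (hc.mono fun x hx ↦ congrArg ENNReal.ofReal hx))
  have hpos : ∀ᵐ x ∂μ, ∀ l ∈ s, 0 < f l x := hc.mono fun x hx l hl ↦
    (hf0 l x).lt_of_ne' fun h ↦ hc0 (hx.symm.trans (prod_eq_zero hl h))
  intro i hi
  have hcorr' : ∀ᵐ x ∂μ, ∀ᵐ y ∂μ, ∀ l ∈ s, 0 ≤ (f l x - f l y) * (f i x - f i y) :=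
    Measure.ae_ae_of_ae_prod ((eventually_all_finset s).2 fun l _ ↦ hcorr l i)
  refine eventuallyConst_ae_of_ae_ae ?_
  filter_upwards [hcorr', hc, hpos] with x hxy hx hxpos
  filter_upwards [hxy, hc, hpos] with y hxy hy hypos
  have heq : ∏ l ∈ s, f l x = ∏ l ∈ s, f l y := hx.trans hy.symm
  refine le_antisymm (le_of_prod_eq_prod_of_correlated hi hypos hxy heq)
    (le_of_prod_eq_prod_of_correlated hi hxpos (fun l hl ↦ ?_) heq.symm)
  linarith [hxy l hl]

theorem measure_univ_mul_prod_lintegral_le [SFinite μ] (hf : ∀ i, Measurable (f i))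
    (hf0 : ∀ i x, 0 ≤ f i x) (hcorr : ∀ i j, AECorrelated μ (f i) (f j)) (s : Finset ι) :
    μ Set.univ * ∏ i ∈ s, ∫⁻ x, ENNReal.ofReal (f i x) ∂μ ≤
      μ Set.univ ^ #s * ∫⁻ x, ENNReal.ofReal (∏ i ∈ s, f i x) ∂μ := by
  classical
  induction s using Finset.induction_on with
  | empty => simp
  | @insert a s ha ih =>
    have hpair := (AECorrelated.finset_prod (s := s) (fun i _ ↦ hcorr a i) hf0).lintegral_mul_le
      (hf a) (by fun_prop) (hf0 a) fun x ↦ prod_nonneg fun i _ ↦ hf0 i x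
    simp_rw [prod_insert ha, card_insert_of_notMem ha]
    calc μ Set.univ * ((∫⁻ x, ENNReal.ofReal (f a x) ∂μ) *
          ∏ i ∈ s, ∫⁻ x, ENNReal.ofReal (f i x) ∂μ)
        = (∫⁻ x, ENNReal.ofReal (f a x) ∂μ) *
          (μ Set.univ * ∏ i ∈ s, ∫⁻ x, ENNReal.ofReal (f i x) ∂μ) := mul_left_comm _ _ _
      _ ≤ (∫⁻ x, ENNReal.ofReal (f a x) ∂μ) *
          (μ Set.univ ^ #s * ∫⁻ x, ENNReal.ofReal (∏ i ∈ s, f i x) ∂μ) := by gcongr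
      _ = μ Set.univ ^ #s * ((∫⁻ x, ENNReal.ofReal (f a x) ∂μ) *
          ∫⁻ x, ENNReal.ofReal (∏ i ∈ s, f i x) ∂μ) := mul_left_comm _ _ _
      _ ≤ μ Set.univ ^ #s * (μ Set.univ *
          ∫⁻ x, ENNReal.ofReal (f a x * ∏ i ∈ s, f i x) ∂μ) := by gcongr
      _ = _ := by rw [pow_succ, mul_assoc]

theorem exists_forall_eventuallyConst_of_measure_univ_mul_prod_lintegral_eq [IsFiniteMeasure μ]
    [Nonempty ι] (hf : ∀ i, Measurable (f i)) (hf0 : ∀ i x, 0 ≤ f i x)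
    (hcorr : ∀ i j, AECorrelated μ (f i) (f j)) (hpos : ∀ i, ∫⁻ x, ENNReal.ofReal (f i x) ∂μ ≠ 0)
    (hfin : ∀ i, ∫⁻ x, ENNReal.ofReal (f i x) ∂μ ≠ ⊤) (s : Finset ι)
    (heq : μ Set.univ * ∏ i ∈ s, ∫⁻ x, ENNReal.ofReal (f i x) ∂μ =
      μ Set.univ ^ #s * ∫⁻ x, ENNReal.ofReal (∏ i ∈ s, f i x) ∂μ) :
    ∃ i₀, ∀ i ∈ s, i ≠ i₀ → EventuallyConst (f i) (ae μ) := by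
  classical
  induction s using Finset.induction_on with
  | empty => exact ⟨Classical.arbitrary ι, by simp⟩
  | @insert a s ha ih =>
    have hμ : μ Set.univ ≠ 0 := fun h ↦ hpos a (by simp [Measure.measure_univ_eq_zero.1 h])
    have hN0 : μ Set.univ ^ #s ≠ 0 := pow_ne_zero _ hμ
    have hcorrG : AECorrelated μ (f a) fun x ↦ ∏ i ∈ s, f i x :=
      .finset_prod (fun i _ ↦ hcorr a i) hf0
    have hG0 x : 0 ≤ ∏ i ∈ s, f i x := prod_nonneg fun i _ ↦ hf0 i x
    simp_rw [prod_insert ha, card_insert_of_notMem ha, pow_succ, mul_left_comm (μ Set.univ),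
      mul_assoc] at heq
    obtain ⟨hPJ, hFJ⟩ := ENNReal.eq_and_eq_of_mul_eq_mul (hpos a) (hfin a) hN0
      (ENNReal.pow_ne_top (measure_ne_top μ _)) (measure_univ_mul_prod_lintegral_le hf hf0 hcorr s)
      (hcorrG.lintegral_mul_le (hf a) (by fun_prop) (hf0 a) hG0) heq
    set P := μ Set.univ * ∏ i ∈ s, ∫⁻ x, ENNReal.ofReal (f i x) ∂μ
    set J := ∫⁻ x, ENNReal.ofReal (∏ i ∈ s, f i x) ∂μ
    have hP0 : P ≠ 0 := mul_ne_zero hμ (prod_ne_zero_iff.2 fun i _ ↦ hpos i)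
    have hPtop : P ≠ ⊤ :=
      ENNReal.mul_ne_top (measure_ne_top μ _) (ENNReal.prod_ne_top fun i _ ↦ hfin i)
    have hJtop : J ≠ ⊤ := fun h ↦ hPtop (by rw [hPJ, h, ENNReal.mul_top hN0])
    have hJ0 : J ≠ 0 := fun h ↦ hP0 (by rw [hPJ, h, mul_zero])
    rcases hcorrG.eventuallyConst_or_of_lintegral_mul_eq (hf a) (by fun_prop) (hf0 a) hG0
      (ENNReal.mul_ne_top (hfin a) hJtop) hFJ.symm with hconst | hconst
    · obtain ⟨i₀, hi₀⟩ := ih hPJ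
      refine ⟨i₀, fun i hi hne ↦ ?_⟩
      rcases mem_insert.1 hi with rfl | hi
      exacts [hconst, hi₀ i hi hne]
    · exact ⟨a, fun i hi hne ↦ eventuallyConst_of_eventuallyConst_finset_prod hcorr hf0 hconst
        hJ0 i ((mem_insert.1 hi).resolve_left hne)⟩

theorem measure_univ_mul_prod_lintegral_eq_of_eventuallyConst (hf : ∀ i, Measurable (f i))
    (hf0 : ∀ i x, 0 ≤ f i x) (s : Finset ι) (i₀ : ι)
    (hconst : ∀ i ∈ s, i ≠ i₀ → EventuallyConst (f i) (ae μ)) :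
    μ Set.univ * ∏ i ∈ s, ∫⁻ x, ENNReal.ofReal (f i x) ∂μ =
      μ Set.univ ^ #s * ∫⁻ x, ENNReal.ofReal (∏ i ∈ s, f i x) ∂μ := by
  classical
  induction s using Finset.induction_on with
  | empty => simp
  | @insert a s ha ih =>
    have hpair :
        EventuallyConst (f a) (ae μ) ∨ EventuallyConst (fun x ↦ ∏ i ∈ s, f i x) (ae μ) := by
      by_cases hai : a = i₀
      · exact .inr (.finset_prod fun i hi ↦
          hconst i (mem_insert_of_mem hi) (hai ▸ ne_of_mem_of_not_mem hi ha))
      · exact .inl (hconst a (mem_insert_self a s) hai)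
    simp_rw [prod_insert ha, card_insert_of_notMem ha, pow_succ, mul_left_comm (μ Set.univ),
      mul_assoc, ih fun i hi ↦ hconst i (mem_insert_of_mem hi),
      lintegral_mul_eq_of_eventuallyConst (hf a) (by fun_prop) (hf0 a)
        (fun x ↦ prod_nonneg fun i _ ↦ hf0 i x) hpair]
    exact mul_left_comm _ _ _

end Family

end

/-- **Equality case for `k` nonnegative correlated functions** (Theorem 3.1(2), equality part).
For a finite measure `μ` and nonnegative measurable, `μ`-a.e. pairwise correlated functions
`f₁, …, f_k` with `0 < ∫ f_i dμ < ∞` for each `i`, equality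
`μ(X)^(k-1) ∫ ∏ f_i dμ = ∏ ∫ f_i dμ` holds iff at least `k - 1` of the functions are
`μ`-a.e. constant. -/
theorem stmt_3 {X : Type*} [MeasurableSpace X] (μ : Measure X)
    (hμ : μ Set.univ < ⊤) (k : ℕ) (hk : 1 ≤ k)
    (f : Fin k → X → ℝ) (hmeas : ∀ i, Measurable (f i))
    (hnonneg : ∀ i x, 0 ≤ f i x)
    (hcorr : ∀ i j, ∀ᵐ p ∂(μ.prod μ),
      0 ≤ (f i p.1 - f i p.2) * (f j p.1 - f j p.2))
    (hpos : ∀ i, 0 < ∫⁻ x, ENNReal.ofReal (f i x) ∂μ)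
    (hfin : ∀ i, ∫⁻ x, ENNReal.ofReal (f i x) ∂μ < ⊤) :
    (μ Set.univ) ^ (k - 1) * ∫⁻ x, ∏ i, ENNReal.ofReal (f i x) ∂μ =
        ∏ i, ∫⁻ x, ENNReal.ofReal (f i x) ∂μ ↔
      ∃ i₀ : Fin k, ∀ i ≠ i₀, ∃ c : ℝ, ∀ᵐ x ∂μ, f i x = c := by
  have : IsFiniteMeasure μ := ⟨hμ⟩
  obtain ⟨n, rfl⟩ : ∃ n, k = n + 1 := ⟨k - 1, by omega⟩
  have hμ0 : μ Set.univ ≠ 0 := fun h ↦ (hpos 0).ne' (by simp [Measure.measure_univ_eq_zero.1 h])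
  have hprod : ∫⁻ x, ∏ i, ENNReal.ofReal (f i x) ∂μ = ∫⁻ x, ENNReal.ofReal (∏ i, f i x) ∂μ :=
    lintegral_congr fun x ↦ (ENNReal.ofReal_prod_of_nonneg fun i _ ↦ hnonneg i x).symm
  have hconst i : EventuallyConst (f i) (ae μ) ↔ ∃ c : ℝ, ∀ᵐ x ∂μ, f i x = c :=
    eventuallyConst_iff_exists_eventuallyEq
  rw [hprod, Nat.add_sub_cancel, ← ENNReal.mul_right_inj hμ0 (measure_ne_top μ _), ← mul_assoc,
    ← pow_succ', eq_comm]
  simp_rw [← hconst]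
  constructor
  · intro heq
    obtain ⟨i₀, hi₀⟩ := exists_forall_eventuallyConst_of_measure_univ_mul_prod_lintegral_eq hmeas
      hnonneg hcorr (fun i ↦ (hpos i).ne') (fun i ↦ (hfin i).ne) univ
      (by rwa [card_univ, Fintype.card_fin])
    exact ⟨i₀, fun i ↦ hi₀ i (mem_univ i)⟩
  · rintro ⟨i₀, hi₀⟩
    have := measure_univ_mul_prod_lintegral_eq_of_eventuallyConst hmeas hnonneg univ i₀
      fun i _ ↦ hi₀ i
    rwa [card_univ, Fintype.card_fin] at this
end

section
/- Let k ≥ 1 and for each j = 1, …, k let (x_i(j))_{i ∈ ℕ} be a nondecreasing sequence with values in [0, ∞], and let (μ_i)_{i ∈ ℕ} be real numbers with 0 < μ_i for all i and ∑_{i} μ_i < ∞. Then (∑_i μ_i)^{k−1} · ∑_i (∏_{j=1}^k x_i(j)) μ_i ≥ ∏_{j=1}^k ∑_i x_i(j) μ_i, where all sums are taken in the extended nonnegative reals [0, ∞]. -/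
lemma pair_rearrange (a b c d : ENNReal) (h1 : a ≤ b) (h2 : c ≤ d) :
    a * d + b * c ≤ a * c + b * d := by
  obtain ⟨e, rfl⟩ := exists_add_of_le h1
  obtain ⟨f, rfl⟩ := exists_add_of_le h2
  have : a * c + (a + e) * (c + f) = (a * (c + f) + (a + e) * c) + e * f := by ring
  rw [this]
  exact le_self_add

lemma expand_sum (a b : ℕ → ENNReal) :
    ∑' i, ∑' j, (a i * b j + a j * b i) = 2 * ((∑' i, a i) * (∑' i, b i)) := by
  have h1 : ∀ i : ℕ, ∑' j, (a i * b j + a j * b i) = (∑' j, a i * b j) + ∑' j, a j * b i :=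
    fun i => Summable.tsum_add ENNReal.summable ENNReal.summable
  simp_rw [h1]
  rw [Summable.tsum_add ENNReal.summable ENNReal.summable]
  simp_rw [ENNReal.tsum_mul_left, ENNReal.tsum_mul_right]
  rw [ENNReal.tsum_mul_left]
  ring

/-- Two-sequence weighted Chebyshev sum inequality in `ENNReal`. -/
lemma cheb2 (f g w : ℕ → ENNReal) (hf : Monotone f) (hg : Monotone g) :
    (∑' i, f i * w i) * (∑' i, g i * w i) ≤ (∑' i, w i) * ∑' i, f i * g i * w i := by
  have key : ∀ i j : ℕ, f i * w i * (g j * w j) + f j * w j * (g i * w i) ≤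
      w i * (f j * g j * w j) + w j * (f i * g i * w i) := by
    intro i j
    rcases le_total i j with h | h
    · have h' := pair_rearrange _ _ _ _ (hf h) (hg h)
      calc f i * w i * (g j * w j) + f j * w j * (g i * w i)
          = (f i * g j + f j * g i) * (w i * w j) := by ring
        _ ≤ (f i * g i + f j * g j) * (w i * w j) := mul_le_mul_left h' _
        _ = w i * (f j * g j * w j) + w j * (f i * g i * w i) := by ring
    · have h' := pair_rearrange _ _ _ _ (hf h) (hg h)
      calc f i * w i * (g j * w j) + f j * w j * (g i * w i)
          = (f j * g i + f i * g j) * (w i * w j) := by ring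
        _ ≤ (f j * g j + f i * g i) * (w i * w j) := mul_le_mul_left h' _
        _ = w i * (f j * g j * w j) + w j * (f i * g i * w i) := by ring
  have hL : ∑' i : ℕ, ∑' j : ℕ, (f i * w i * (g j * w j) + f j * w j * (g i * w i)) =
      2 * ((∑' i, f i * w i) * (∑' i, g i * w i)) :=
    expand_sum (fun i => f i * w i) (fun i => g i * w i)
  have hR : ∑' i : ℕ, ∑' j : ℕ, (w i * (f j * g j * w j) + w j * (f i * g i * w i)) =
      2 * ((∑' i, w i) * (∑' i, f i * g i * w i)) :=
    expand_sum (fun i => w i) (fun i => f i * g i * w i)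
  have hle : (2 : ENNReal) * ((∑' i, f i * w i) * (∑' i, g i * w i)) ≤
      2 * ((∑' i, w i) * (∑' i, f i * g i * w i)) := by
    rw [← hL, ← hR]
    exact ENNReal.tsum_le_tsum fun i => ENNReal.tsum_le_tsum fun j => key i j
  exact (ENNReal.mul_le_mul_iff_right two_ne_zero (by norm_num)).mp hle

/-- **Discrete Chebyshev-type inequality** (Lemma 3.2, inequality part). For nondecreasing
sequences `x(1), …, x(k)` with values in `[0, ∞]` and strictly positive real weights `μ_i`
with `∑ μ_i < ∞`, one has
`(∑ μ_i)^(k-1) ∑_i (∏_j x_i(j)) μ_i ≥ ∏_j ∑_i x_i(j) μ_i` in `[0, ∞]`. -/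
theorem stmt_4 (k : ℕ) (hk : 1 ≤ k) (x : Fin k → ℕ → ENNReal)
    (hmono : ∀ j, Monotone (x j))
    (μ : ℕ → ℝ) (hμpos : ∀ i, 0 < μ i)
    (hμsum : ∑' i, ENNReal.ofReal (μ i) < ⊤) :
    ∏ j, ∑' i, x j i * ENNReal.ofReal (μ i) ≤
      (∑' i, ENNReal.ofReal (μ i)) ^ (k - 1) *
        ∑' i, (∏ j, x j i) * ENNReal.ofReal (μ i) := by
  set w : ℕ → ENNReal := fun i => ENNReal.ofReal (μ i) with hw
  clear hμsum hμpos hw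
  induction k with
  | zero => omega
  | succ n ih =>
    rcases Nat.eq_or_lt_of_le hk with h1 | h1
    · -- n = 0, k = 1
      obtain rfl : n = 0 := by omega
      simp [Fin.prod_univ_one]
    · have hn : 1 ≤ n := by omega
      have ihn := ih hn (fun j => x j.castSucc) (fun j => hmono j.castSucc)
      -- product of the first n sequences is monotone
      have hPmono : Monotone (fun i => ∏ j : Fin n, x j.castSucc i) := by
        intro a b hab
        exact Finset.prod_le_prod' fun j _ => hmono j.castSucc hab
      have hlast := hmono (Fin.last n)
      calc ∏ j : Fin (n + 1), ∑' i, x j i * w i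
          = (∏ j : Fin n, ∑' i, x j.castSucc i * w i) *
              ∑' i, x (Fin.last n) i * w i := by
            rw [Fin.prod_univ_castSucc]
        _ ≤ ((∑' i, w i) ^ (n - 1) * ∑' i, (∏ j : Fin n, x j.castSucc i) * w i) *
              ∑' i, x (Fin.last n) i * w i := mul_le_mul_left ihn _
        _ = (∑' i, w i) ^ (n - 1) *
              ((∑' i, (∏ j : Fin n, x j.castSucc i) * w i) *
                (∑' i, x (Fin.last n) i * w i)) := by ring
        _ ≤ (∑' i, w i) ^ (n - 1) *
              ((∑' i, w i) * ∑' i, (∏ j : Fin n, x j.castSucc i) * x (Fin.last n) i * w i) := by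
            exact mul_le_mul_right (cheb2 _ _ w hPmono hlast) _
        _ = (∑' i, w i) ^ (n + 1 - 1) *
              ∑' i, (∏ j : Fin (n + 1), x j i) * w i := by
            simp_rw [Fin.prod_univ_castSucc]
            rw [← mul_assoc, ← pow_succ]
            have h2 : n - 1 + 1 = n + 1 - 1 := by omega
            rw [h2]
end

section
/- Let k ≥ 1 and for each j = 1, …, k let (x_i(j))_{i ∈ ℕ} be a nondecreasing sequence with values in [0, ∞], and let (μ_i)_{i ∈ ℕ} be real numbers with 0 < μ_i for all i and ∑_i μ_i < ∞. Assume moreover that 0 < ∑_i x_i(j) μ_i < ∞ for every j = 1, …, k. Then equality (∑_i μ_i)^{k−1} · ∑_i (∏_{j=1}^k x_i(j)) μ_i = ∏_{j=1}^k ∑_i x_i(j) μ_i holds if and only if at least k − 1 of the sequences (x_i(j))_i are constant, i.e. there exists j₀ such that for every j ≠ j₀ the sequence (x_i(j))_i is constant. -/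
/-!
Chebyshev's sum inequality `(∑ a ν) (∑ b ν) ≤ (∑ ν) (∑ a b ν)` for monotone `a`, `b` comes from
symmetrising: twice the difference is `∑_{i,j} (a i - a j) (b i - b j) ν i ν j`, a sum of
nonnegative terms, and when everything is finite equality forces every term to vanish, i.e. `a` or
`b` is constant. Applying it to `x j` and `∏_{j' ∈ s} x j'` and inducting on `s` gives
`(∑ ν) ∏_{j ∈ s} ∑ x j ν ≤ (∑ ν) ^ #s ∑ (∏_{j ∈ s} x j) ν`. Under equality every step of the
induction is an equality, so at each step either the new sequence or the product of the previous
ones is constant; a constant nonzero product of monotone finite factors has constant factors.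
-/

open scoped ENNReal NNReal

theorem Monotone.forall_eq_or_forall_eq {α β γ : Type*} [LinearOrder α] [PartialOrder β]
    [PartialOrder γ] {a : α → β} {b : α → γ} (ha : Monotone a) (hb : Monotone b)
    (h : ∀ i j, i ≤ j → a i = a j ∨ b i = b j) : (∀ i j, a i = a j) ∨ (∀ i j, b i = b j) := by
  by_contra! ⟨⟨i, i', hi⟩, ⟨j, j', hj⟩⟩
  set p := i ⊓ i' ⊓ (j ⊓ j')
  set q := i ⊔ i' ⊔ (j ⊔ j')
  rcases h p q (by simp [p, q]) with hpq | hpq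
  · exact hi <| (ha.eq_of_ge_of_le hpq (by simp [p]) (by simp [q])).trans
      (ha.eq_of_ge_of_le hpq (by simp [p]) (by simp [q])).symm
  · exact hj <| (hb.eq_of_ge_of_le hpq (by simp [p]) (by simp [q])).trans
      (hb.eq_of_ge_of_le hpq (by simp [p]) (by simp [q])).symm

namespace ENNReal

variable {α ι : Type*}

protected theorem mul_add_mul_le_mul_add_mul {a b c d : ℝ≥0∞} (hab : a ≤ b) (hcd : c ≤ d) :
    a * d + b * c ≤ a * c + b * d := by
  obtain ⟨p, rfl⟩ := exists_add_of_le hab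
  obtain ⟨q, rfl⟩ := exists_add_of_le hcd
  calc a * (c + q) + (a + p) * c ≤ a * (c + q) + (a + p) * c + p * q := le_self_add
    _ = a * c + (a + p) * (c + q) := by ring

theorem eq_or_eq_of_mul_add_mul_eq {a b c d : ℝ≥0∞} (hab : a ≤ b) (hcd : c ≤ d)
    (hb : b ≠ ∞) (hd : d ≠ ∞) (h : a * d + b * c = a * c + b * d) : a = b ∨ c = d := by
  lift b to ℝ≥0 using hb
  lift d to ℝ≥0 using hd
  lift a to ℝ≥0 using ne_top_of_le_ne_top coe_ne_top hab
  lift c to ℝ≥0 using ne_top_of_le_ne_top coe_ne_top hcd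
  norm_cast at hab hcd h ⊢
  by_contra! hne
  exact (mul_add_mul_lt_mul_add_mul (hab.lt_of_ne hne.1) (hcd.lt_of_ne hne.2)).ne h

theorem tsum_mul_tsum (f g : α → ℝ≥0∞) :
    (∑' i, f i) * ∑' i, g i = ∑' p : α × α, f p.1 * g p.2 := by
  simp_rw [ENNReal.tsum_prod', ENNReal.tsum_mul_left, ENNReal.tsum_mul_right]

theorem tsum_mul_tsum_add_tsum_mul_tsum (f g : α → ℝ≥0∞) :
    (∑' i, f i) * (∑' i, g i) + (∑' i, g i) * ∑' i, f i =
      ∑' p : α × α, (f p.1 * g p.2 + g p.1 * f p.2) := by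
  rw [ENNReal.tsum_add, tsum_mul_tsum, tsum_mul_tsum]

theorem ne_top_of_tsum_mul_ne_top {f ν : α → ℝ≥0∞} (h : ∑' i, f i * ν i ≠ ∞) {i : α}
    (hν : ν i ≠ 0) : f i ≠ ∞ :=
  (lt_top_of_mul_ne_top_left (ENNReal.ne_top_of_tsum_ne_top h i) hν).ne

theorem eq_of_tsum_eq_tsum {f g : α → ℝ≥0∞} (hf : ∑' i, f i ≠ ∞) (hle : ∀ i, f i ≤ g i)
    (h : ∑' i, f i = ∑' i, g i) (i : α) : f i = g i :=
  (hle i).eq_of_not_lt fun hlt => (ENNReal.tsum_lt_tsum hf hle hlt).ne h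

theorem two_mul_tsum_mul_tsum_eq_tsum_prod (ν a b : α → ℝ≥0∞) :
    2 * ((∑' i, a i * ν i) * ∑' i, b i * ν i) =
      ∑' p : α × α, (a p.1 * b p.2 + a p.2 * b p.1) * (ν p.1 * ν p.2) := by
  rw [two_mul]
  nth_rw 2 [mul_comm]
  rw [tsum_mul_tsum_add_tsum_mul_tsum]
  exact tsum_congr fun p => by ring

theorem two_mul_tsum_mul_tsum_mul_eq_tsum_prod (ν a b : α → ℝ≥0∞) :
    2 * ((∑' i, ν i) * ∑' i, a i * b i * ν i) =
      ∑' p : α × α, (a p.1 * b p.1 + a p.2 * b p.2) * (ν p.1 * ν p.2) := by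
  rw [two_mul]
  nth_rw 2 [mul_comm]
  rw [tsum_mul_tsum_add_tsum_mul_tsum]
  exact tsum_congr fun p => by ring

theorem eq_of_prod_eq_prod_of_le {s : Finset ι} {f g : ι → ℝ≥0∞} (hle : ∀ j ∈ s, f j ≤ g j)
    (hf : ∀ j ∈ s, f j ≠ 0) (hg : ∀ j ∈ s, g j ≠ ∞) (h : ∏ j ∈ s, f j = ∏ j ∈ s, g j) :
    ∀ j ∈ s, f j = g j := by
  classical
  intro j hj
  set Q := ∏ j ∈ s.erase j, g j
  have hQ0 : Q ≠ 0 := ne_bot_of_le_ne_bot (Finset.prod_ne_zero_iff.mpr fun i hi =>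
    hf i (Finset.mem_of_mem_erase hi)) (Finset.prod_le_prod' fun i hi =>
    hle i (Finset.mem_of_mem_erase hi))
  have hQtop : Q ≠ ∞ := prod_ne_top fun i hi => hg i (Finset.mem_of_mem_erase hi)
  have hle' : f j * Q ≤ g j * Q := mul_le_mul_left (hle j hj) Q
  have hge : g j * Q ≤ f j * Q := calc
    g j * Q = ∏ j ∈ s, f j := by rw [h, Finset.mul_prod_erase s g hj]
    _ = f j * ∏ j ∈ s.erase j, f j := (Finset.mul_prod_erase s f hj).symm
    _ ≤ f j * Q := mul_le_mul_right (Finset.prod_le_prod' fun i hi =>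
      hle i (Finset.mem_of_mem_erase hi)) _
  exact (ENNReal.mul_left_inj hQ0 hQtop).mp (hle'.antisymm hge)

theorem tsum_pow_mul_tsum_prod_eq_prod_tsum [Fintype ι] (ν : α → ℝ≥0∞)
    (x : ι → α → ℝ≥0∞) (j₀ : ι) (c : ι → ℝ≥0∞) (hc : ∀ j ≠ j₀, ∀ i, x j i = c j) :
    (∑' i, ν i) ^ (Fintype.card ι - 1) * ∑' i, (∏ j, x j i) * ν i =
      ∏ j, ∑' i, x j i * ν i := by
  classical
  have hprod : ∀ i, ∏ j, x j i = x j₀ i * ∏ j ∈ Finset.univ.erase j₀, c j := fun i => by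
    rw [← Finset.mul_prod_erase _ _ (Finset.mem_univ j₀)]
    exact congrArg _ (Finset.prod_congr rfl fun j hj => hc j (Finset.ne_of_mem_erase hj) i)
  have hA : ∀ j ∈ Finset.univ.erase j₀, ∑' i, x j i * ν i = c j * ∑' i, ν i := fun j hj => by
    simp_rw [hc j (Finset.ne_of_mem_erase hj)]
    exact ENNReal.tsum_mul_left
  rw [← Finset.mul_prod_erase _ _ (Finset.mem_univ j₀), Finset.prod_congr rfl hA,
    Finset.prod_mul_distrib, Finset.prod_const, Finset.card_erase_of_mem (Finset.mem_univ _),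
    Finset.card_univ]
  simp_rw [hprod, mul_right_comm _ (∏ j ∈ Finset.univ.erase j₀, c j), ENNReal.tsum_mul_right]
  ring

section LinearOrder

variable [LinearOrder α] {ν a b : α → ℝ≥0∞} {x : ι → α → ℝ≥0∞}

theorem _root_.Monotone.mul_add_mul_le (ha : Monotone a) (hb : Monotone b) (i j : α) :
    a i * b j + a j * b i ≤ a i * b i + a j * b j := by
  rcases le_total i j with h | h
  · exact ENNReal.mul_add_mul_le_mul_add_mul (ha h) (hb h)
  · rw [add_comm (a i * b j), add_comm (a i * b i)]
    exact ENNReal.mul_add_mul_le_mul_add_mul (ha h) (hb h)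

theorem tsum_mul_tsum_le_tsum_mul_tsum_mul (ha : Monotone a) (hb : Monotone b) :
    (∑' i, a i * ν i) * (∑' i, b i * ν i) ≤ (∑' i, ν i) * ∑' i, a i * b i * ν i := by
  have h := ENNReal.tsum_le_tsum fun p : α × α =>
    mul_le_mul_left (ha.mul_add_mul_le hb p.1 p.2) (ν p.1 * ν p.2)
  rw [← two_mul_tsum_mul_tsum_eq_tsum_prod, ← two_mul_tsum_mul_tsum_mul_eq_tsum_prod] at h
  exact (ENNReal.mul_le_mul_iff_right two_ne_zero ofNat_ne_top).mp h

theorem forall_eq_or_forall_eq_of_tsum_mul_tsum_eq (ha : Monotone a) (hb : Monotone b)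
    (hν0 : ∀ i, ν i ≠ 0) (hνtop : ∀ i, ν i ≠ ∞)
    (haν : ∑' i, a i * ν i ≠ ∞) (hbν : ∑' i, b i * ν i ≠ ∞)
    (h : (∑' i, a i * ν i) * (∑' i, b i * ν i) = (∑' i, ν i) * ∑' i, a i * b i * ν i) :
    (∀ i j, a i = a j) ∨ (∀ i j, b i = b j) := by
  have hsum := two_mul_tsum_mul_tsum_eq_tsum_prod ν a b
  rw [h, two_mul_tsum_mul_tsum_mul_eq_tsum_prod] at hsum
  have hfin : ∑' p : α × α, (a p.1 * b p.2 + a p.2 * b p.1) * (ν p.1 * ν p.2) ≠ ∞ := by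
    rw [← two_mul_tsum_mul_tsum_eq_tsum_prod]
    exact mul_ne_top ofNat_ne_top (mul_ne_top haν hbν)
  have hpt := eq_of_tsum_eq_tsum hfin
    (fun p => mul_le_mul_left (ha.mul_add_mul_le hb p.1 p.2) (ν p.1 * ν p.2)) hsum.symm
  refine ha.forall_eq_or_forall_eq hb fun i j hij => ?_
  refine eq_or_eq_of_mul_add_mul_eq (ha hij) (hb hij) (ne_top_of_tsum_mul_ne_top haν (hν0 j))
    (ne_top_of_tsum_mul_ne_top hbν (hν0 j)) ?_
  exact (ENNReal.mul_left_inj (mul_ne_zero (hν0 i) (hν0 j)) (mul_ne_top (hνtop i) (hνtop j))).mp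
    (hpt (i, j))

theorem forall_eq_of_prod_eq {s : Finset ι} (hmono : ∀ j ∈ s, Monotone (x j))
    (htop : ∀ j ∈ s, ∀ i, x j i ≠ ∞)
    (h0 : ∀ i, ∏ j ∈ s, x j i ≠ 0) (hconst : ∀ i i', ∏ j ∈ s, x j i = ∏ j ∈ s, x j i') :
    ∀ j ∈ s, ∀ i i', x j i = x j i' := by
  have key : ∀ i i', i ≤ i' → ∀ j ∈ s, x j i = x j i' := fun i i' hii' =>
    eq_of_prod_eq_prod_of_le (fun j hj => hmono j hj hii')
      (fun j hj => Finset.prod_ne_zero_iff.mp (h0 i) j hj) (fun j hj => htop j hj i')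
      (hconst i i')
  intro j hj i i'
  rcases le_total i i' with h | h
  · exact key i i' h j hj
  · exact (key i' i h j hj).symm

theorem monotone_prod (hmono : ∀ j, Monotone (x j)) (s : Finset ι) :
    Monotone fun i => ∏ j ∈ s, x j i :=
  fun _ _ h => Finset.prod_le_prod' fun j _ => hmono j h

variable [DecidableEq ι]

theorem tsum_mul_tsum_prod_le (hmono : ∀ j, Monotone (x j)) {s : Finset ι} {j : ι} (hj : j ∉ s) :
    (∑' i, x j i * ν i) * (∑' i, (∏ j ∈ s, x j i) * ν i) ≤
      (∑' i, ν i) * ∑' i, (∏ j ∈ insert j s, x j i) * ν i := by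
  simp only [Finset.prod_insert hj]
  exact tsum_mul_tsum_le_tsum_mul_tsum_mul (hmono j) (monotone_prod hmono s)

theorem tsum_mul_prod_tsum_le (hmono : ∀ j, Monotone (x j)) (s : Finset ι) :
    (∑' i, ν i) * ∏ j ∈ s, ∑' i, x j i * ν i ≤
      (∑' i, ν i) ^ s.card * ∑' i, (∏ j ∈ s, x j i) * ν i := by
  induction s using Finset.induction_on with
  | empty => simp
  | insert j s hj ih =>
    calc (∑' i, ν i) * ∏ j ∈ insert j s, ∑' i, x j i * ν i
        = (∑' i, x j i * ν i) * ((∑' i, ν i) * ∏ j ∈ s, ∑' i, x j i * ν i) := by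
          rw [Finset.prod_insert hj]; ring
      _ ≤ (∑' i, x j i * ν i) * ((∑' i, ν i) ^ s.card * ∑' i, (∏ j ∈ s, x j i) * ν i) := by
          gcongr
      _ = (∑' i, ν i) ^ s.card * ((∑' i, x j i * ν i) * ∑' i, (∏ j ∈ s, x j i) * ν i) := by
          ring
      _ ≤ (∑' i, ν i) ^ s.card * ((∑' i, ν i) * ∑' i, (∏ j ∈ insert j s, x j i) * ν i) :=
          mul_le_mul_right (tsum_mul_tsum_prod_le hmono hj) _
      _ = (∑' i, ν i) ^ (insert j s).card * ∑' i, (∏ j ∈ insert j s, x j i) * ν i := by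
          rw [Finset.card_insert_of_notMem hj, pow_succ, mul_assoc]

theorem tsum_mul_prod_tsum_eq_of_insert_eq (hmono : ∀ j, Monotone (x j)) {s : Finset ι} {j : ι}
    (hj : j ∉ s) (hS : ∑' i, ν i ≠ ∞) (hA0 : ∑' i, x j i * ν i ≠ 0)
    (hAtop : ∑' i, x j i * ν i ≠ ∞)
    (h : (∑' i, ν i) * ∏ j ∈ insert j s, ∑' i, x j i * ν i =
      (∑' i, ν i) ^ (insert j s).card * ∑' i, (∏ j ∈ insert j s, x j i) * ν i) :
    (∑' i, ν i) * ∏ j ∈ s, ∑' i, x j i * ν i =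
        (∑' i, ν i) ^ s.card * ∑' i, (∏ j ∈ s, x j i) * ν i ∧
      (∑' i, x j i * ν i) * (∑' i, (∏ j ∈ s, x j i) * ν i) =
        (∑' i, ν i) * ∑' i, (∏ j ∈ insert j s, x j i) * ν i := by
  have hS0 : ∑' i, ν i ≠ 0 := fun h0 => hA0 (by simp [ENNReal.tsum_eq_zero.mp h0])
  have hL : (∑' i, x j i * ν i) * ((∑' i, ν i) * ∏ j ∈ s, ∑' i, x j i * ν i) ≤
      (∑' i, x j i * ν i) * ((∑' i, ν i) ^ s.card * ∑' i, (∏ j ∈ s, x j i) * ν i) :=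
    mul_le_mul_right (tsum_mul_prod_tsum_le hmono s) _
  have hR : (∑' i, x j i * ν i) * ((∑' i, ν i) ^ s.card * ∑' i, (∏ j ∈ s, x j i) * ν i) ≤
      (∑' i, ν i) ^ s.card * ((∑' i, ν i) * ∑' i, (∏ j ∈ insert j s, x j i) * ν i) := by
    rw [mul_left_comm]
    exact mul_le_mul_right (tsum_mul_tsum_prod_le hmono hj) _
  have hLR : (∑' i, x j i * ν i) * ((∑' i, ν i) * ∏ j ∈ s, ∑' i, x j i * ν i) =
      (∑' i, ν i) ^ s.card * ((∑' i, ν i) * ∑' i, (∏ j ∈ insert j s, x j i) * ν i) := by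
    rw [Finset.prod_insert hj, Finset.card_insert_of_notMem hj, pow_succ] at h
    rw [mul_left_comm, h, mul_assoc]
  refine ⟨(ENNReal.mul_right_inj hA0 hAtop).mp (hL.antisymm (hR.trans hLR.symm.le)), ?_⟩
  refine (ENNReal.mul_right_inj (pow_ne_zero s.card hS0) (pow_ne_top hS)).mp ?_
  rw [mul_left_comm]
  exact hR.antisymm (hLR.symm.le.trans hL)

theorem exists_forall_eq_of_tsum_mul_prod_tsum_eq [Nonempty ι] (hmono : ∀ j, Monotone (x j))
    (hν0 : ∀ i, ν i ≠ 0) (hνtop : ∀ i, ν i ≠ ∞) (hS : ∑' i, ν i ≠ ∞)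
    (hA0 : ∀ j, ∑' i, x j i * ν i ≠ 0) (hAtop : ∀ j, ∑' i, x j i * ν i ≠ ∞) (s : Finset ι)
    (h : (∑' i, ν i) * ∏ j ∈ s, ∑' i, x j i * ν i =
      (∑' i, ν i) ^ s.card * ∑' i, (∏ j ∈ s, x j i) * ν i) :
    ∃ j₀, ∀ j ∈ s, j ≠ j₀ → ∀ i i', x j i = x j i' := by
  induction s using Finset.induction_on with
  | empty => exact ⟨Classical.arbitrary ι, by simp⟩
  | insert j s hj ih =>
    obtain ⟨hs, hcheb⟩ := tsum_mul_prod_tsum_eq_of_insert_eq hmono hj hS (hA0 j) (hAtop j) h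
    obtain ⟨j₀, hj₀⟩ := ih hs
    have hS0 : ∑' i, ν i ≠ 0 := fun h0 => hA0 j (by simp [ENNReal.tsum_eq_zero.mp h0])
    have hL0 : (∑' i, ν i) * ∏ j ∈ s, ∑' i, x j i * ν i ≠ 0 :=
      mul_ne_zero hS0 (Finset.prod_ne_zero_iff.mpr fun j _ => hA0 j)
    have hLtop : (∑' i, ν i) * ∏ j ∈ s, ∑' i, x j i * ν i ≠ ∞ :=
      mul_ne_top hS (prod_ne_top fun j _ => hAtop j)
    have hT0 : ∑' i, (∏ j ∈ s, x j i) * ν i ≠ 0 := fun h0 => hL0 (by rw [hs, h0, mul_zero])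
    have hTtop : ∑' i, (∏ j ∈ s, x j i) * ν i ≠ ∞ :=
      (lt_top_of_mul_ne_top_right (hs ▸ hLtop) (pow_ne_zero _ hS0)).ne
    simp only [Finset.prod_insert hj] at hcheb
    rcases forall_eq_or_forall_eq_of_tsum_mul_tsum_eq (hmono j) (monotone_prod hmono s) hν0 hνtop
      (hAtop j) hTtop hcheb with hxj | hP
    · refine ⟨j₀, fun j' hj' hne => ?_⟩
      rcases Finset.mem_insert.mp hj' with rfl | hj'
      exacts [hxj, hj₀ j' hj' hne]
    · refine ⟨j, fun j' hj' hne => forall_eq_of_prod_eq (fun j _ => hmono j)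
        (fun j _ i => ne_top_of_tsum_mul_ne_top (hAtop j) (hν0 i)) (fun i hi => hT0 ?_) hP j'
        (Finset.mem_of_mem_insert_of_ne hj' hne)⟩
      exact ENNReal.tsum_eq_zero.mpr fun i' => by rw [hP i' i, hi, zero_mul]

end LinearOrder

end ENNReal

/-- **Discrete Chebyshev-type inequality, equality case** (Lemma 3.2, equality part). Under the
hypotheses of the discrete inequality, and assuming `0 < ∑_i x_i(j) μ_i < ∞` for every `j`,
equality holds iff at least `k - 1` of the sequences are constant. -/
theorem stmt_5 (k : ℕ) (hk : 1 ≤ k) (x : Fin k → ℕ → ENNReal)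
    (hmono : ∀ j, Monotone (x j))
    (μ : ℕ → ℝ) (hμpos : ∀ i, 0 < μ i)
    (hμsum : ∑' i, ENNReal.ofReal (μ i) < ⊤)
    (hpos : ∀ j, 0 < ∑' i, x j i * ENNReal.ofReal (μ i))
    (hfin : ∀ j, ∑' i, x j i * ENNReal.ofReal (μ i) < ⊤) :
    (∑' i, ENNReal.ofReal (μ i)) ^ (k - 1) *
        ∑' i, (∏ j, x j i) * ENNReal.ofReal (μ i) =
        ∏ j, ∑' i, x j i * ENNReal.ofReal (μ i) ↔
      ∃ j₀ : Fin k, ∀ j ≠ j₀, ∀ i, x j i = x j 0 := by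
  have : Nonempty (Fin k) := ⟨⟨0, hk⟩⟩
  constructor
  · intro h
    obtain ⟨j₀, hj₀⟩ := ENNReal.exists_forall_eq_of_tsum_mul_prod_tsum_eq hmono
      (fun i => (ENNReal.ofReal_pos.mpr (hμpos i)).ne') (fun _ => ENNReal.ofReal_ne_top)
      hμsum.ne (fun j => (hpos j).ne') (fun j => (hfin j).ne) Finset.univ (by
        rw [← h, Finset.card_univ, Fintype.card_fin, ← mul_assoc, ← pow_succ',
          Nat.sub_add_cancel hk])
    exact ⟨j₀, fun j hj i => hj₀ j (Finset.mem_univ j) hj i 0⟩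
  · rintro ⟨j₀, hj₀⟩
    simpa using ENNReal.tsum_pow_mul_tsum_prod_eq_prod_tsum _ x j₀ (fun j => x j 0) hj₀
end

section
/- Let (a_n)_{n ∈ ℕ} be a sequence of nonnegative real numbers and let ρ > 0 be such that the sequence (ρ^n a_n)_n is nonincreasing. Then for all real numbers z, γ with 0 ≤ z < γ < ρ, the series ∑_n a_n z^n and ∑_n a_n γ^n converge and (ρ − z) ∑_{n=0}^∞ a_n z^n ≥ (ρ − γ) ∑_{n=0}^∞ a_n γ^n; in other words, the function z ↦ (ρ − z) ∑_n a_n z^n is nonincreasing on [0, ρ). -/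
/-!
Abel summation: `(ρ - x) ∑ aₙ xⁿ = ρ a₀ - ∑ (aₙ - ρ aₙ₊₁) xⁿ⁺¹`, and the monotonicity of
`ρⁿ aₙ` says exactly that the coefficients `aₙ - ρ aₙ₊₁` are nonnegative, so the right-hand
side is nonincreasing in `x ≥ 0`.
-/

open Set

section PowerSeries

variable {a : ℕ → ℝ} {ρ x : ℝ}

lemma summable_mul_pow_of_antitone (ha : ∀ n, 0 ≤ a n) (hρ : 0 < ρ)
    (hanti : Antitone fun n => ρ ^ n * a n) (hx : 0 ≤ x) (hxρ : x < ρ) :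
    Summable fun n => a n * x ^ n := by
  have hq : 0 ≤ x / ρ := div_nonneg hx hρ.le
  refine Summable.of_nonneg_of_le (fun n => mul_nonneg (ha n) (pow_nonneg hx n)) (fun n => ?_)
    ((summable_geometric_of_lt_one hq ((div_lt_one hρ).2 hxρ)).mul_left (a 0))
  calc a n * x ^ n = ρ ^ n * a n * (x / ρ) ^ n := by
        rw [div_pow]; field_simp
    _ ≤ a 0 * (x / ρ) ^ n := by
        gcongr
        simpa using hanti (Nat.zero_le n)

lemma hasSum_abel_shift (ρ : ℝ) (hs : Summable fun n => a n * x ^ n) :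
    HasSum (fun n => (a n - ρ * a (n + 1)) * x ^ (n + 1))
      (ρ * a 0 - (ρ - x) * ∑' n, a n * x ^ n) := by
  have htail := (hasSum_nat_add_iff' 1).2 hs.hasSum
  rw [Finset.sum_range_one, pow_zero, mul_one] at htail
  have hterm : (fun n => (a n - ρ * a (n + 1)) * x ^ (n + 1)) =
      fun n => x * (a n * x ^ n) - ρ * (a (n + 1) * x ^ (n + 1)) := by
    ext n; ring
  rw [hterm, show ρ * a 0 - (ρ - x) * ∑' n, a n * x ^ n =
      x * ∑' n, a n * x ^ n - ρ * (∑' n, a n * x ^ n - a 0) by ring]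
  exact (hs.hasSum.mul_left x).sub (htail.mul_left ρ)

lemma mul_succ_le_of_pow_mul_succ_le (hρ : 0 < ρ) {n : ℕ}
    (h : ρ ^ (n + 1) * a (n + 1) ≤ ρ ^ n * a n) : ρ * a (n + 1) ≤ a n := by
  rw [pow_succ, mul_assoc] at h
  exact le_of_mul_le_mul_left h (pow_pos hρ n)

theorem antitoneOn_sub_mul_tsum_mul_pow (ha : ∀ n, 0 ≤ a n) (hρ : 0 < ρ)
    (hmono : ∀ n, ρ ^ (n + 1) * a (n + 1) ≤ ρ ^ n * a n) :
    AntitoneOn (fun x => (ρ - x) * ∑' n, a n * x ^ n) (Ico 0 ρ) := by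
  have hsum {x : ℝ} (hx : x ∈ Ico 0 ρ) := hasSum_abel_shift ρ
    (summable_mul_pow_of_antitone ha hρ (antitone_nat_of_succ_le hmono) hx.1 hx.2)
  intro z hz γ hγ hzγ
  have hcoeff : ∀ n, (a n - ρ * a (n + 1)) * z ^ (n + 1) ≤ (a n - ρ * a (n + 1)) * γ ^ (n + 1) :=
    fun n => mul_le_mul_of_nonneg_left (pow_le_pow_left₀ hz.1 hzγ (n + 1))
      (sub_nonneg.2 (mul_succ_le_of_pow_mul_succ_le hρ (hmono n)))
  linarith [hasSum_le hcoeff (hsum hz) (hsum hγ)]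

end PowerSeries

/-- **Power series application, nonincreasing case** (Section 4). If `a_n ≥ 0` and
`(ρ^n a_n)_n` is nonincreasing for some `ρ > 0`, then for `0 ≤ z < γ < ρ` the series
`∑ a_n z^n` and `∑ a_n γ^n` converge and `(ρ - z) ∑ a_n z^n ≥ (ρ - γ) ∑ a_n γ^n`,
i.e. `z ↦ (ρ - z) ∑ a_n z^n` is nonincreasing on `[0, ρ)`. -/
theorem stmt_9 (a : ℕ → ℝ) (ha : ∀ n, 0 ≤ a n) (ρ : ℝ) (hρ : 0 < ρ)
    (hmono : ∀ n, ρ ^ (n + 1) * a (n + 1) ≤ ρ ^ n * a n)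
    (z γ : ℝ) (hz : 0 ≤ z) (hzγ : z < γ) (hγρ : γ < ρ) :
    Summable (fun n => a n * z ^ n) ∧ Summable (fun n => a n * γ ^ n) ∧
      (ρ - γ) * ∑' n, a n * γ ^ n ≤ (ρ - z) * ∑' n, a n * z ^ n := by
  have hanti := antitone_nat_of_succ_le (f := fun n => ρ ^ n * a n) hmono
  have hγ : 0 ≤ γ := hz.trans hzγ.le
  exact ⟨summable_mul_pow_of_antitone ha hρ hanti hz (hzγ.trans hγρ),
    summable_mul_pow_of_antitone ha hρ hanti hγ hγρ,
    antitoneOn_sub_mul_tsum_mul_pow ha hρ hmono ⟨hz, hzγ.trans hγρ⟩ ⟨hγ, hγρ⟩ hzγ.le⟩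
end

section
/- Let (a_n)_{n ∈ ℕ} be a sequence of nonnegative real numbers and let ρ > 0 be such that the sequence (ρ^n a_n)_n is nondecreasing, and assume that the series ∑_n a_n z^n converges for every z ∈ [0, ρ). Then for all real numbers z, γ with 0 ≤ z < γ < ρ one has (ρ − z) ∑_{n=0}^∞ a_n z^n ≤ (ρ − γ) ∑_{n=0}^∞ a_n γ^n; in other words, the function z ↦ (ρ − z) ∑_n a_n z^n is nondecreasing on [0, ρ). -/
/-! Multiplying the power series by `ρ - z` gives
`(ρ - z) ∑ aₙ zⁿ = ρ a₀ + ∑ (ρ aₙ₊₁ - aₙ) zⁿ⁺¹`, and monotonicity of `ρⁿ aₙ` says exactly that the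
coefficients `ρ aₙ₊₁ - aₙ` are nonnegative, so the right-hand side is nondecreasing in `z ≥ 0`. -/

theorem HasSum.sub_mul_powerSeries {R : Type*} [CommRing R] [TopologicalSpace R]
    [IsTopologicalRing R] {a : ℕ → R} {z s : R} (ρ : R) (h : HasSum (fun n => a n * z ^ n) s) :
    HasSum (fun n => (ρ * a (n + 1) - a n) * z ^ (n + 1)) ((ρ - z) * s - ρ * a 0) := by
  have hshift : HasSum (fun n => a (n + 1) * z ^ (n + 1)) (s - a 0) := by
    simpa using (hasSum_nat_add_iff' 1).mpr h
  rw [show (ρ - z) * s - ρ * a 0 = ρ * (s - a 0) - z * s by ring]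
  have hterm : (fun n => (ρ * a (n + 1) - a n) * z ^ (n + 1)) =
      fun n => ρ * (a (n + 1) * z ^ (n + 1)) - z * (a n * z ^ n) := by
    funext n
    ring
  rw [hterm]
  exact (hshift.mul_left ρ).sub (h.mul_left z)

theorem le_mul_succ_of_pow_mul_le_pow_succ_mul {K : Type*} [Field K] [LinearOrder K]
    [IsStrictOrderedRing K] {a : ℕ → K} {ρ : K} (hρ : 0 < ρ) {n : ℕ}
    (h : ρ ^ n * a n ≤ ρ ^ (n + 1) * a (n + 1)) : a n ≤ ρ * a (n + 1) := by
  rw [pow_succ, mul_assoc] at h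
  exact le_of_mul_le_mul_left h (pow_pos hρ n)

theorem stmt_10_general (a : ℕ → ℝ) (ρ : ℝ) (hρ : 0 < ρ)
    (hmono : ∀ n, ρ ^ n * a n ≤ ρ ^ (n + 1) * a (n + 1))
    (hsum : ∀ z : ℝ, 0 ≤ z → z < ρ → Summable (fun n => a n * z ^ n))
    (z γ : ℝ) (hz : 0 ≤ z) (hzγ : z < γ) (hγρ : γ < ρ) :
    (ρ - z) * ∑' n, a n * z ^ n ≤ (ρ - γ) * ∑' n, a n * γ ^ n := by
  have hsum_z := ((hsum z hz (hzγ.trans hγρ)).hasSum).sub_mul_powerSeries ρ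
  have hsum_γ := ((hsum γ (hz.trans hzγ.le) hγρ).hasSum).sub_mul_powerSeries ρ
  have hcoef n : 0 ≤ ρ * a (n + 1) - a n :=
    sub_nonneg.mpr (le_mul_succ_of_pow_mul_le_pow_succ_mul hρ (hmono n))
  have hle := hasSum_le (fun n => mul_le_mul_of_nonneg_left (pow_le_pow_left₀ hz hzγ.le _)
    (hcoef n)) hsum_z hsum_γ
  linarith

/-- **Power series application, nondecreasing case** (Section 4). If `a_n ≥ 0`, `(ρ^n a_n)_n`
is nondecreasing for some `ρ > 0`, and `∑ a_n z^n` converges for every `z ∈ [0, ρ)`, then for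
`0 ≤ z < γ < ρ` one has `(ρ - z) ∑ a_n z^n ≤ (ρ - γ) ∑ a_n γ^n`,
i.e. `z ↦ (ρ - z) ∑ a_n z^n` is nondecreasing on `[0, ρ)`. -/
theorem stmt_10 (a : ℕ → ℝ) (ha : ∀ n, 0 ≤ a n) (ρ : ℝ) (hρ : 0 < ρ)
    (hmono : ∀ n, ρ ^ n * a n ≤ ρ ^ (n + 1) * a (n + 1))
    (hsum : ∀ z : ℝ, 0 ≤ z → z < ρ → Summable (fun n => a n * z ^ n))
    (z γ : ℝ) (hz : 0 ≤ z) (hzγ : z < γ) (hγρ : γ < ρ) :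
    (ρ - z) * ∑' n, a n * z ^ n ≤ (ρ - γ) * ∑' n, a n * γ ^ n :=
  stmt_10_general a ρ hρ hmono hsum z γ hz hzγ hγρ
end

section
/- Let (Ω, F, P) be a probability space, let k ≥ 1, and let X₀, X₁, …, X_k : Ω → ℝ be measurable random variables that are (jointly) independent. Then P(⋂_{i=1}^k {ω : X_i(ω) ≥ X₀(ω)}) ≥ ∏_{i=1}^k P({ω : X_i(ω) ≥ X₀(ω)}). -/
/-!
Condition on `X₀ = t`. With `Gᵢ t = P(Xᵢ ≥ t)` and `μ₀` the law of `X₀`, independence gives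
`P(Xᵢ ≥ X₀) = ∫ Gᵢ dμ₀` and `P(⋂ᵢ {Xᵢ ≥ X₀}) = ∫ ∏ᵢ Gᵢ dμ₀`. All `Gᵢ` are antitone, so by
Chebyshev's integral inequality for similarly ordered functions, `∏ᵢ ∫ Gᵢ dμ₀ ≤ ∫ ∏ᵢ Gᵢ dμ₀`.
-/

open MeasureTheory ProbabilityTheory
open scoped ENNReal

section Rearrangement

variable {R : Type*} [CommSemiring R] [LinearOrder R] [CanonicallyOrderedAdd R]

theorem mul_add_mul_le_mul_add_mul_of_canonicallyOrderedAdd {a b c d : R} (hab : a ≤ b)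
    (hcd : c ≤ d) : a * d + b * c ≤ a * c + b * d := by
  obtain ⟨e, rfl⟩ := exists_add_of_le hab
  obtain ⟨e', rfl⟩ := exists_add_of_le hcd
  calc a * (c + e') + (a + e) * c ≤ a * (c + e') + (a + e) * c + e * e' := le_self_add
    _ = a * c + (a + e) * (c + e') := by ring

theorem Monovary.mul_add_mul_le_mul_add_mul_of_canonicallyOrderedAdd {α : Type*} {f g : α → R}
    (hfg : Monovary f g) (x y : α) : f x * g y + f y * g x ≤ f x * g x + f y * g y := by
  rcases lt_trichotomy (g x) (g y) with hlt | heq | hgt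
  · exact _root_.mul_add_mul_le_mul_add_mul_of_canonicallyOrderedAdd (hfg hlt) hlt.le
  · rw [heq]
  · rw [add_comm (f x * g y), add_comm (f x * g x)]
    exact _root_.mul_add_mul_le_mul_add_mul_of_canonicallyOrderedAdd (hfg hgt) hgt.le

end Rearrangement

section Chebyshev

variable {α : Type*} [MeasurableSpace α] {μ : Measure α} [IsProbabilityMeasure μ]

theorem lintegral_mul_lintegral_le_lintegral_mul {f g : α → ℝ≥0∞} (hfg : Monovary f g)
    (hf : Measurable f) (hg : Measurable g) :
    (∫⁻ x, f x ∂μ) * ∫⁻ x, g x ∂μ ≤ ∫⁻ x, f x * g x ∂μ := by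
  have mixed : ∫⁻ x, ∫⁻ y, (f x * g y + f y * g x) ∂μ ∂μ
      = 2 * ((∫⁻ x, f x ∂μ) * ∫⁻ x, g x ∂μ) := by
    simp_rw [lintegral_add_left (hg.const_mul _), lintegral_const_mul _ hg,
      lintegral_mul_const _ hf]
    rw [lintegral_add_left (hf.mul_const _), lintegral_mul_const _ hf, lintegral_const_mul _ hg]
    ring
  have diagonal : ∫⁻ x, ∫⁻ y, (f x * g x + f y * g y) ∂μ ∂μ = 2 * ∫⁻ x, f x * g x ∂μ := by
    simp_rw [lintegral_add_left measurable_const, lintegral_const, measure_univ, mul_one]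
    rw [lintegral_add_right _ measurable_const, lintegral_const, measure_univ, mul_one, two_mul]
  have twice : 2 * ((∫⁻ x, f x ∂μ) * ∫⁻ x, g x ∂μ) ≤ 2 * ∫⁻ x, f x * g x ∂μ := by
    rw [← mixed, ← diagonal]
    exact lintegral_mono fun x ↦ lintegral_mono fun y ↦
      hfg.mul_add_mul_le_mul_add_mul_of_canonicallyOrderedAdd x y
  exact (ENNReal.mul_le_mul_iff_right two_ne_zero ENNReal.ofNat_ne_top).mp twice

theorem prod_lintegral_le_lintegral_prod_of_antitone [LinearOrder α] {ι : Type*} (s : Finset ι)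
    {g : ι → α → ℝ≥0∞} (hg : ∀ i, Antitone (g i)) (hgm : ∀ i, Measurable (g i)) :
    ∏ i ∈ s, ∫⁻ x, g i x ∂μ ≤ ∫⁻ x, ∏ i ∈ s, g i x ∂μ := by
  induction s using Finset.cons_induction with
  | empty => simp
  | cons a s ha ih =>
    have hprod : Antitone fun x ↦ ∏ i ∈ s, g i x :=
      fun x y hxy ↦ Finset.prod_le_prod' fun i _ ↦ hg i hxy
    calc ∏ i ∈ Finset.cons a s ha, ∫⁻ x, g i x ∂μ
        = (∫⁻ x, g a x ∂μ) * ∏ i ∈ s, ∫⁻ x, g i x ∂μ := Finset.prod_cons ha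
      _ ≤ (∫⁻ x, g a x ∂μ) * ∫⁻ x, ∏ i ∈ s, g i x ∂μ := mul_le_mul_right ih _
      _ ≤ ∫⁻ x, g a x * ∏ i ∈ s, g i x ∂μ :=
          lintegral_mul_lintegral_le_lintegral_mul ((hg a).monovary hprod) (hgm a)
            (Finset.measurable_prod _ fun i _ ↦ hgm i)
      _ = ∫⁻ x, ∏ i ∈ Finset.cons a s ha, g i x ∂μ := by simp only [Finset.prod_cons]

end Chebyshev

namespace ProbabilityTheory

variable {Ω α β : Type*} [MeasurableSpace Ω] [MeasurableSpace α] [MeasurableSpace β]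
  {P : Measure Ω}

theorem IndepFun.measure_mem_eq_lintegral [IsFiniteMeasure P] {X : Ω → α} {Y : Ω → β}
    (hXY : IndepFun X Y P) (hX : Measurable X) (hY : Measurable Y) {S : Set (α × β)}
    (hS : MeasurableSet S) :
    P {ω | (X ω, Y ω) ∈ S} = ∫⁻ x, P {ω | (x, Y ω) ∈ S} ∂(P.map X) := by
  change P ((fun ω ↦ (X ω, Y ω)) ⁻¹' S) = _
  rw [← Measure.map_apply (hX.prodMk hY) hS,
    (indepFun_iff_map_prod_eq_prod_map_map hX.aemeasurable hY.aemeasurable).1 hXY,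
    Measure.prod_apply hS]
  refine lintegral_congr fun x ↦ ?_
  rw [Measure.map_apply hY (measurable_prodMk_left hS)]
  rfl

theorem iIndepFun.indepFun_zero_succ {n : ℕ} {X : Fin (n + 1) → Ω → β} (hX : iIndepFun X P)
    (hXm : ∀ i, Measurable (X i)) : IndepFun (X 0) (fun ω (i : Fin n) ↦ X i.succ ω) P :=
  (hX.indepFun_finset {0} {0}ᶜ disjoint_compl_right hXm).comp
    (φ := fun (y : ({0} : Finset (Fin (n + 1))) → β) ↦ y ⟨0, Finset.mem_singleton_self 0⟩)
    (ψ := fun (y : ({0}ᶜ : Finset (Fin (n + 1))) → β) (i : Fin n) ↦ y ⟨i.succ, by simp⟩)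
    (measurable_pi_apply _) (measurable_pi_lambda _ fun _ ↦ measurable_pi_apply _)

end ProbabilityTheory

theorem stmt_11_general {Ω : Type*} [MeasurableSpace Ω] (P : Measure Ω)
    [IsProbabilityMeasure P] (k : ℕ)
    (X : Fin (k + 1) → Ω → ℝ) (hmeas : ∀ i, Measurable (X i))
    (hindep : iIndepFun X P) :
    ∏ i : Fin k, P {ω | X 0 ω ≤ X i.succ ω} ≤
      P (⋂ i : Fin k, {ω | X 0 ω ≤ X i.succ ω}) := by
  have := Measure.isProbabilityMeasure_map (μ := P) (hmeas 0).aemeasurable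
  set tail : Fin k → ℝ → ℝ≥0∞ := fun i t ↦ P {ω | t ≤ X i.succ ω}
  have tail_anti (i : Fin k) : Antitone (tail i) := fun _ _ hst ↦
    measure_mono fun _ hω ↦ le_trans hst hω
  have single (i : Fin k) : P {ω | X 0 ω ≤ X i.succ ω} = ∫⁻ t, tail i t ∂(P.map (X 0)) :=
    (hindep.indepFun (Fin.succ_ne_zero i).symm).measure_mem_eq_lintegral (hmeas 0)
      (hmeas i.succ) (measurableSet_le measurable_fst measurable_snd)
  have joint : P (⋂ i : Fin k, {ω | X 0 ω ≤ X i.succ ω})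
      = ∫⁻ t, ∏ i, tail i t ∂(P.map (X 0)) := by
    have hS : MeasurableSet {p : ℝ × (Fin k → ℝ) | ∀ i, p.1 ≤ p.2 i} := by
      rw [Set.ofPred_forall]
      exact .iInter fun i ↦
        measurableSet_le measurable_fst ((measurable_pi_apply i).comp measurable_snd)
    rw [Set.iInter_ofPred]
    refine ((hindep.indepFun_zero_succ hmeas).measure_mem_eq_lintegral (hmeas 0)
      (measurable_pi_lambda _ fun i ↦ hmeas i.succ) hS).trans (lintegral_congr fun t ↦ ?_)
    change P {ω | ∀ i : Fin k, t ≤ X i.succ ω} = _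
    rw [← Set.iInter_ofPred]
    exact (hindep.precomp (Fin.succ_injective k)).meas_iInter
      fun i ↦ ⟨Set.Ici t, measurableSet_Ici, rfl⟩
  calc ∏ i : Fin k, P {ω | X 0 ω ≤ X i.succ ω}
      = ∏ i : Fin k, ∫⁻ t, tail i t ∂(P.map (X 0)) := by simp only [single]
    _ ≤ ∫⁻ t, ∏ i, tail i t ∂(P.map (X 0)) :=
        prod_lintegral_le_lintegral_prod_of_antitone _ tail_anti fun i ↦ (tail_anti i).measurable
    _ = P (⋂ i : Fin k, {ω | X 0 ω ≤ X i.succ ω}) := joint.symm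

/-- **Positive correlation of the events `{X_i ≥ X₀}`** (Section 4). If `X₀, X₁, …, X_k` are
jointly independent real random variables on a probability space `(Ω, F, P)`, then
`P(⋂_{i=1}^k {X_i ≥ X₀}) ≥ ∏_{i=1}^k P(X_i ≥ X₀)`. -/
theorem stmt_11 {Ω : Type*} [MeasurableSpace Ω] (P : Measure Ω)
    [IsProbabilityMeasure P] (k : ℕ) (hk : 1 ≤ k)
    (X : Fin (k + 1) → Ω → ℝ) (hmeas : ∀ i, Measurable (X i))
    (hindep : iIndepFun X P) :
    ∏ i : Fin k, P {ω | X 0 ω ≤ X i.succ ω} ≤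
      P (⋂ i : Fin k, {ω | X 0 ω ≤ X i.succ ω}) :=
  stmt_11_general P k X hmeas hindep
end

section
/- Let (Ω, F, P) be a probability space, let k ≥ 1, and let X₀, X₁, …, X_k : Ω → ℝ be measurable random variables that are (jointly) independent. Then P(⋂_{i=1}^k {ω : X_i(ω) ≤ X₀(ω)}) ≥ ∏_{i=1}^k P({ω : X_i(ω) ≤ X₀(ω)}). -/
open MeasureTheory ProbabilityTheory
open scoped ENNReal

/-!
Conditioning on `X₀ = x`, independence turns `P(X_i ≤ X₀)` into `∫ F_i dP_{X₀}` and
`P(⋂ {X_i ≤ X₀})` into `∫ ∏ F_i dP_{X₀}`, where `F_i` is the distribution function of `X_i`.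
The `F_i` are all nondecreasing, so iterating Chebyshev's integral inequality
`∫ f ∫ g ≤ ∫ f g` for similarly ordered `f, g` (integrate `(f x - f y)(g x - g y) ≥ 0` over
`x` and `y`) gives the claim.
-/

theorem ENNReal.mul_add_mul_le_mul_add_mul_s12 {a b c d : ℝ≥0∞} (hab : a ≤ b) (hcd : c ≤ d) :
    a * d + b * c ≤ a * c + b * d := by
  obtain ⟨e, rfl⟩ := exists_add_of_le hab
  obtain ⟨f, rfl⟩ := exists_add_of_le hcd
  ring_nf
  exact le_self_add

theorem Monovary.lintegral_mul_lintegral_le {α : Type*} [MeasurableSpace α] {μ : Measure α}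
    [IsProbabilityMeasure μ] {f g : α → ℝ≥0∞} (hfg : Monovary f g) (hf : Measurable f)
    (hg : Measurable g) :
    (∫⁻ x, f x ∂μ) * ∫⁻ x, g x ∂μ ≤ ∫⁻ x, f x * g x ∂μ := by
  have rearrangement : ∀ x y, f x * g y + f y * g x ≤ f x * g x + f y * g y := by
    intro x y
    rcases lt_trichotomy (g x) (g y) with h | h | h
    · exact ENNReal.mul_add_mul_le_mul_add_mul_s12 (hfg h) h.le
    · rw [h]
    · rw [add_comm (f x * g y), add_comm (f x * g x)]
      exact ENNReal.mul_add_mul_le_mul_add_mul_s12 (hfg h) h.le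
  have : 2 * ((∫⁻ x, f x ∂μ) * ∫⁻ x, g x ∂μ) ≤ 2 * ∫⁻ x, f x * g x ∂μ :=
    calc 2 * ((∫⁻ x, f x ∂μ) * ∫⁻ x, g x ∂μ)
        = ∫⁻ x, ∫⁻ y, (f x * g y + f y * g x) ∂μ ∂μ := by
          simp only [lintegral_add_left (hg.const_mul _), lintegral_const_mul _ hg,
            lintegral_mul_const _ hf, lintegral_add_left (hf.mul_const _)]
          ring
      _ ≤ ∫⁻ x, ∫⁻ y, (f x * g x + f y * g y) ∂μ ∂μ :=
          lintegral_mono fun x => lintegral_mono fun y => rearrangement x y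
      _ = 2 * ∫⁻ x, f x * g x ∂μ := by
          simp only [lintegral_add_left measurable_const, lintegral_const, measure_univ, mul_one,
            lintegral_add_right _ measurable_const, two_mul]
  exact (ENNReal.mul_le_mul_iff_right two_ne_zero ENNReal.ofNat_ne_top).mp this

theorem Finset.prod_lintegral_le_lintegral_prod {α ι : Type*} [MeasurableSpace α] [LinearOrder α]
    {μ : Measure α} [IsProbabilityMeasure μ] (s : Finset ι) {f : ι → α → ℝ≥0∞}
    (hmono : ∀ i, Monotone (f i)) (hf : ∀ i, Measurable (f i)) :
    ∏ i ∈ s, ∫⁻ x, f i x ∂μ ≤ ∫⁻ x, ∏ i ∈ s, f i x ∂μ := by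
  induction s using Finset.cons_induction with
  | empty => simp
  | cons a s ha ih =>
    have hprod_mono : Monotone fun x => ∏ i ∈ s, f i x :=
      fun x y hxy => Finset.prod_le_prod' fun i _ => hmono i hxy
    simp only [Finset.prod_cons]
    calc (∫⁻ x, f a x ∂μ) * ∏ i ∈ s, ∫⁻ x, f i x ∂μ
        ≤ (∫⁻ x, f a x ∂μ) * ∫⁻ x, ∏ i ∈ s, f i x ∂μ := by gcongr
      _ ≤ ∫⁻ x, f a x * ∏ i ∈ s, f i x ∂μ :=
          ((hmono a).monovary hprod_mono).lintegral_mul_lintegral_le (hf a)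
            (Finset.measurable_prod _ fun i _ => hf i)

theorem ProbabilityTheory.IndepFun.measure_prodMk_mem_eq_lintegral {Ω α β : Type*}
    [MeasurableSpace Ω] [MeasurableSpace α] [MeasurableSpace β] {P : Measure Ω} [IsFiniteMeasure P]
    {X : Ω → α} {Y : Ω → β} (h : IndepFun X Y P) (hX : Measurable X) (hY : Measurable Y)
    {S : Set (α × β)} (hS : MeasurableSet S) :
    P {ω | (X ω, Y ω) ∈ S} = ∫⁻ x, P {ω | (x, Y ω) ∈ S} ∂P.map X := by
  change P ((fun ω => (X ω, Y ω)) ⁻¹' S) = _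
  rw [← Measure.map_apply (hX.prodMk hY) hS,
    (indepFun_iff_map_prod_eq_prod_map_map hX.aemeasurable hY.aemeasurable).mp h,
    Measure.prod_apply hS]
  exact lintegral_congr fun x => Measure.map_apply hY (measurable_prodMk_left hS)

theorem ProbabilityTheory.iIndepFun.indepFun_zero_succ_s12 {Ω β : Type*} [MeasurableSpace Ω]
    [MeasurableSpace β] {P : Measure Ω} {k : ℕ} {X : Fin (k + 1) → Ω → β} (h : iIndepFun X P)
    (hX : ∀ i, Measurable (X i)) :
    IndepFun (X 0) (fun ω (i : Fin k) => X i.succ ω) P := by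
  have := h.indepFun_finset {0} (Finset.univ.map (Fin.succEmb k)) (by simp) hX
  have hφ : Measurable fun g : ({0} : Finset (Fin (k + 1))) → β => g ⟨0, by simp⟩ :=
    measurable_pi_apply _
  have hψ : Measurable fun (g : Finset.univ.map (Fin.succEmb k) → β) (i : Fin k) =>
      g ⟨i.succ, by simp⟩ :=
    measurable_pi_lambda _ fun i => measurable_pi_apply _
  exact this.comp hφ hψ

theorem ProbabilityTheory.iIndepFun.measure_iInter_le_eq_lintegral_prod {Ω ι : Type*}
    [MeasurableSpace Ω] [Fintype ι] {P : Measure Ω} [IsFiniteMeasure P] {X : Ω → ℝ}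
    {Y : ι → Ω → ℝ} (hY : iIndepFun Y P) (hXY : IndepFun X (fun ω i => Y i ω) P)
    (hX : Measurable X) (hYm : ∀ i, Measurable (Y i)) :
    P (⋂ i, {ω | Y i ω ≤ X ω}) = ∫⁻ x, ∏ i, P {ω | Y i ω ≤ x} ∂P.map X := by
  have hS : MeasurableSet (⋂ i, {p : ℝ × (ι → ℝ) | p.2 i ≤ p.1}) :=
    .iInter fun i => measurableSet_le measurable_snd.eval measurable_fst
  have := hXY.measure_prodMk_mem_eq_lintegral hX (measurable_pi_lambda _ hYm) hS
  simp only [Set.mem_iInter, Set.mem_ofPred_eq] at this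
  rw [Set.iInter_ofPred, this]
  refine lintegral_congr fun x => ?_
  rw [← Set.iInter_ofPred]
  exact hY.meas_iInter fun i => ⟨Set.Iic x, measurableSet_Iic, rfl⟩

theorem stmt_12_general {Ω : Type*} [MeasurableSpace Ω] (P : Measure Ω)
    [IsProbabilityMeasure P] (k : ℕ)
    (X : Fin (k + 1) → Ω → ℝ) (hmeas : ∀ i, Measurable (X i))
    (hindep : iIndepFun X P) :
    ∏ i : Fin k, P {ω | X i.succ ω ≤ X 0 ω} ≤
      P (⋂ i : Fin k, {ω | X i.succ ω ≤ X 0 ω}) := by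
  have := Measure.isProbabilityMeasure_map (μ := P) (hmeas 0).aemeasurable
  set F : Fin k → ℝ → ℝ≥0∞ := fun i x => P {ω | X i.succ ω ≤ x}
  have hF_mono : ∀ i, Monotone (F i) := fun i x y hxy =>
    measure_mono fun ω (hω : X i.succ ω ≤ x) => hω.trans hxy
  have h_single : ∀ i : Fin k, P {ω | X i.succ ω ≤ X 0 ω} = ∫⁻ x, F i x ∂P.map (X 0) :=
    fun i => (hindep.indepFun (Fin.succ_ne_zero i).symm).measure_prodMk_mem_eq_lintegral
      (hmeas 0) (hmeas i.succ) (measurableSet_le measurable_snd measurable_fst)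
  calc ∏ i : Fin k, P {ω | X i.succ ω ≤ X 0 ω}
      = ∏ i : Fin k, ∫⁻ x, F i x ∂P.map (X 0) := Finset.prod_congr rfl fun i _ => h_single i
    _ ≤ ∫⁻ x, ∏ i : Fin k, F i x ∂P.map (X 0) :=
        Finset.univ.prod_lintegral_le_lintegral_prod hF_mono fun i => (hF_mono i).measurable
    _ = P (⋂ i : Fin k, {ω | X i.succ ω ≤ X 0 ω}) :=
        ((hindep.precomp (Fin.succ_injective k)).measure_iInter_le_eq_lintegral_prod
          (hindep.indepFun_zero_succ_s12 hmeas) (hmeas 0) fun i => hmeas i.succ).symm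

/-- **Positive correlation of the events `{X_i ≤ X₀}`** (Section 4). If `X₀, X₁, …, X_k` are
jointly independent real random variables on a probability space `(Ω, F, P)`, then
`P(⋂_{i=1}^k {X_i ≤ X₀}) ≥ ∏_{i=1}^k P(X_i ≤ X₀)`. -/
theorem stmt_12 {Ω : Type*} [MeasurableSpace Ω] (P : Measure Ω)
    [IsProbabilityMeasure P] (k : ℕ) (hk : 1 ≤ k)
    (X : Fin (k + 1) → Ω → ℝ) (hmeas : ∀ i, Measurable (X i))
    (hindep : iIndepFun X P) :
    ∏ i : Fin k, P {ω | X i.succ ω ≤ X 0 ω} ≤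
      P (⋂ i : Fin k, {ω | X i.succ ω ≤ X 0 ω}) :=
  stmt_12_general P k X hmeas hindep
end
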